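/- Let p ≥ 5 and n ≥ 2. If B, C are r×r matrices over ℤ/p^n with C ≡ 0 (mod p), B the matrix with 1 in position (1,r) (r ≥ 2) and 0 elsewhere, then (I + B + C)^p ≠ I; indeed the (1,r) entry of (I+B+C)^p is congruent to p modulo p^2. -/

import Mathlib

/-- Let `p ≥ 5`, `n ≥ 2`, `r ≥ 2`.  If `B, C` are `r × r` matrices over `ℤ/pⁿ` with every entry
of `C` divisible by `p` and `B` the matrix with `1` in position `(1, r)` and `0` elsewhere, then
`(I + B + C) ^ p ≠ I`; indeed its `(1, r)` entry is congruent to `p` modulo `p²`. -/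
theorem stmt4 (p n r : ℕ) (hp : p.Prime) (hp5 : 5 ≤ p) (hn : 2 ≤ n) (hr : 2 ≤ r)
    (B C : Matrix (Fin r) (Fin r) (ZMod (p ^ n)))
    (hB : B = Matrix.single (⟨0, by omega⟩ : Fin r) (⟨r - 1, by omega⟩ : Fin r) 1)
    (hC : ∀ i j, ∃ x : ZMod (p ^ n), C i j = (p : ZMod (p ^ n)) * x) :
    (1 + B + C) ^ p ≠ 1 ∧
      ∃ x : ZMod (p ^ n),
        ((1 + B + C) ^ p) (⟨0, by omega⟩ : Fin r) (⟨r - 1, by omega⟩ : Fin r) =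
          (p : ZMod (p ^ n)) + (p : ZMod (p ^ n)) ^ 2 * x := by
  set q : ZMod (p ^ n) := (p : ZMod (p ^ n)) with hq
  set i0 : Fin r := ⟨0, by omega⟩ with hi0
  set ir : Fin r := ⟨r - 1, by omega⟩ with hir
  have hne : i0 ≠ ir := by
    simp only [hi0, hir, Ne, Fin.mk.injEq]
    omega
  set A := B + C with hA
  have hCd : ∀ i j, q ∣ C i j := fun i j => (hC i j).elim fun x hx => ⟨x, hx⟩
  have hMulR : ∀ (d : ZMod (p ^ n)) (M N : Matrix (Fin r) (Fin r) (ZMod (p ^ n))),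
      (∀ i j, d ∣ N i j) → ∀ i j, d ∣ (M * N) i j := by
    intro d M N h i j
    rw [Matrix.mul_apply]
    exact Finset.dvd_sum fun k _ => Dvd.dvd.mul_left (h k j) _
  have hMulL : ∀ (d : ZMod (p ^ n)) (M N : Matrix (Fin r) (Fin r) (ZMod (p ^ n))),
      (∀ i j, d ∣ M i j) → ∀ i j, d ∣ (M * N) i j := by
    intro d M N h i j
    rw [Matrix.mul_apply]
    exact Finset.dvd_sum fun k _ => Dvd.dvd.mul_right (h i k) _
  have hBB : B * B = 0 := by
    rw [hB, Matrix.single_mul_single_of_ne]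
    simp only [Ne, Fin.mk.injEq]
    omega
  have hA2 : ∀ i j, q ∣ (A * A) i j := by
    have h : A * A = B * C + (C * B + C * C) := by
      rw [hA]
      simp only [add_mul, mul_add, hBB, zero_add]
      abel
    intro i j
    rw [h]
    simp only [Matrix.add_apply]
    exact dvd_add (hMulR q B C hCd i j)
      (dvd_add (hMulL q C B hCd i j) (hMulL q C C hCd i j))
  have hApow : ∀ k, 2 ≤ k → ∀ i j, q ∣ (A ^ k) i j := by
    intro k hk i j
    have h : A ^ k = (A * A) * A ^ (k - 2) := by
      rw [← pow_two, ← pow_add]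
      congr 1
      omega
    rw [h]
    exact hMulL q _ _ hA2 i j
  have hA4 : ∀ i j, q ^ 2 ∣ (A ^ 4) i j := by
    intro i j
    have h : A ^ 4 = (A * A) * (A * A) := by
      rw [show (4 : ℕ) = 2 + 2 from rfl, pow_add, pow_two]
    rw [h, Matrix.mul_apply]
    refine Finset.dvd_sum fun k _ => ?_
    rw [pow_two]
    exact mul_dvd_mul (hA2 i k) (hA2 k j)
  have hAp : ∀ i j, q ^ 2 ∣ (A ^ p) i j := by
    intro i j
    have h : A ^ p = A ^ 4 * A ^ (p - 4) := by
      rw [← pow_add]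
      congr 1
      omega
    rw [h]
    exact hMulL _ _ _ hA4 i j
  have hcomm : Commute A (1 : Matrix (Fin r) (Fin r) (ZMod (p ^ n))) := Commute.one_right A
  have hexp : (1 + B + C) ^ p =
      ∑ k ∈ Finset.range (p + 1),
        A ^ k * ((p.choose k : ℕ) : Matrix (Fin r) (Fin r) (ZMod (p ^ n))) := by
    have h1 : (1 : Matrix (Fin r) (Fin r) (ZMod (p ^ n))) + B + C = A + 1 := by
      rw [hA]; abel
    rw [h1, hcomm.add_pow]
    refine Finset.sum_congr rfl fun k _ => ?_
    rw [one_pow, mul_one]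
  have hentry : ∀ (M : Matrix (Fin r) (Fin r) (ZMod (p ^ n))) (c : ℕ) i j,
      (M * ((c : ℕ) : Matrix (Fin r) (Fin r) (ZMod (p ^ n)))) i j = M i j * (c : ZMod (p ^ n)) := by
    intro M c i j
    have h : ((c : ℕ) : Matrix (Fin r) (Fin r) (ZMod (p ^ n)))
        = c • (1 : Matrix (Fin r) (Fin r) (ZMod (p ^ n))) := by
      rw [nsmul_eq_mul, mul_one]
    rw [h, Matrix.mul_smul, mul_one, Matrix.smul_apply, nsmul_eq_mul, mul_comm]
  set f : ℕ → ZMod (p ^ n) := fun k => (A ^ k) i0 ir * ((p.choose k : ℕ) : ZMod (p ^ n)) with hf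
  have hEntrySum : ((1 + B + C) ^ p) i0 ir = ∑ k ∈ Finset.range (p + 1), f k := by
    rw [hexp, Matrix.sum_apply]
    exact Finset.sum_congr rfl fun k _ => hentry _ _ _ _
  -- split the sum
  have e_top := Finset.sum_range_succ f p
  have e1 := Finset.sum_range_succ' f (p - 1)
  rw [show p - 1 + 1 = p by omega] at e1
  have e2 := Finset.sum_range_succ' (fun i => f (i + 1)) (p - 2)
  rw [show p - 2 + 1 = p - 1 by omega] at e2
  have hsplit : ∑ k ∈ Finset.range (p + 1), f k =
      (∑ i ∈ Finset.range (p - 2), f (i + 2)) + f 1 + f 0 + f p := by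
    rw [e_top, e1, e2]
  -- evaluate f 0
  have hf0 : f 0 = 0 := by
    simp only [hf, pow_zero, Nat.choose_zero_right, Nat.cast_one, mul_one]
    exact Matrix.one_apply_ne hne
  -- f 1
  obtain ⟨x, hx⟩ := hC i0 ir
  have hAentry : A i0 ir = 1 + q * x := by
    rw [hA, Matrix.add_apply, hB, hx]
    simp [Matrix.single_apply_same]
  have hf1 : f 1 = q + q ^ 2 * x := by
    simp only [hf, pow_one, Nat.choose_one_right, hAentry]
    rw [hq]
    ring
  have hmid : q ^ 2 ∣ ∑ i ∈ Finset.range (p - 2), f (i + 2) := by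
    refine Finset.dvd_sum fun i hi => ?_
    rw [Finset.mem_range] at hi
    have h1 : q ∣ (A ^ (i + 2)) i0 ir := hApow _ (by omega) _ _
    have h2 : q ∣ ((p.choose (i + 2) : ℕ) : ZMod (p ^ n)) := by
      have hlt : i + 2 < p := by omega
      obtain ⟨c, hc⟩ := hp.dvd_choose_self (by omega) hlt
      exact ⟨(c : ZMod (p ^ n)), by rw [hc]; push_cast; rfl⟩
    rw [hf, pow_two]
    exact mul_dvd_mul h1 h2
  have hfp : q ^ 2 ∣ f p := by
    rw [hf]
    exact Dvd.dvd.mul_right (hAp _ _) _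
  obtain ⟨y, hy⟩ := hmid
  obtain ⟨z, hz⟩ := hfp
  have key : ((1 + B + C) ^ p) i0 ir = q + q ^ 2 * (x + y + z) := by
    rw [hEntrySum, hsplit, hy, hz, hf0, hf1]
    ring
  refine ⟨?_, ⟨x + y + z, key⟩⟩
  intro hcontra
  have h0 : q + q ^ 2 * (x + y + z) = 0 := by
    rw [← key, hcontra]
    exact Matrix.one_apply_ne hne
  have h1 : q ^ (n - 2) * (q + q ^ 2 * (x + y + z)) = 0 := by rw [h0, mul_zero]
  have hqn : q ^ n = 0 := by
    rw [hq, ← Nat.cast_pow]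
    exact ZMod.natCast_self _
  have h2 : q ^ (n - 1) = 0 := by
    have e1' : q ^ (n - 2) * q = q ^ (n - 1) := by
      rw [← pow_succ]
      congr 1
      omega
    have e2' : q ^ (n - 2) * (q ^ 2 * (x + y + z)) = q ^ n * (x + y + z) := by
      rw [← mul_assoc, ← pow_add]
      congr 2
      omega
    rw [mul_add, e1', e2', hqn, zero_mul, add_zero] at h1
    exact h1
  have h3 : ((p ^ (n - 1) : ℕ) : ZMod (p ^ n)) = 0 := by
    rw [Nat.cast_pow, ← hq]
    exact h2
  rw [ZMod.natCast_eq_zero_iff] at h3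
  have := (Nat.pow_dvd_pow_iff_le_right hp.one_lt).mp h3
  omega
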